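/- Let (K,d) be a metric space in which every set of finite diameter is relatively compact, and let (K_{i(e)}, w_e, p_e)_{e∈E} be a contractive Markov system with average contracting rate a ∈ (0,1) such that K_1,…,K_N are nonempty open subsets partitioning K and each restriction p_e|_{K_{i(e)}} is continuous on K_{i(e)}. If the system has a unique invariant Borel probability measure μ, then ∑_{i=1}^N ∫_{K_i} d(x, x_i) dμ(x) < ∞ for every choice of points x_i ∈ K_i, i = 1,…,N. -/

import Mathlib

open MeasureTheory Filter Topology
open scoped ENNReal

/-- A contractive Markov system (CMS) on a metric space `K`, with vertex set `Fin N`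
and (finite) edge set `E`. -/
structure CMS (K : Type*) [MetricSpace K] [MeasurableSpace K]
    (N : ℕ) (E : Type*) [Fintype E] where
  ι : E → Fin N
  τ : E → Fin N
  Ks : Fin N → Set K
  Ks_nonempty : ∀ i, (Ks i).Nonempty
  Ks_meas : ∀ i, MeasurableSet (Ks i)
  Ks_disj : ∀ i j, i ≠ j → Disjoint (Ks i) (Ks j)
  Ks_cover : (⋃ i, Ks i) = Set.univ
  w : E → K → K
  w_meas : ∀ e, Measurable (w e)
  w_maps : ∀ e, Set.MapsTo (w e) (Ks (ι e)) (Ks (τ e))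
  p : E → K → ℝ
  p_meas : ∀ e, Measurable (p e)
  p_nonneg : ∀ e x, 0 ≤ p e x
  p_sum_one : ∀ x, ∑ e, p e x = 1
  p_zero : ∀ e x, x ∉ Ks (ι e) → p e x = 0
  a : ℝ
  a_pos : 0 < a
  a_lt_one : a < 1
  contractive : ∀ i, ∀ x ∈ Ks i, ∀ y ∈ Ks i,
    ∑ e, p e x * dist (w e x) (w e y) ≤ a * dist x y

namespace CMS

variable {K : Type*} [MetricSpace K] [MeasurableSpace K]
  {N : ℕ} {E : Type*} [Fintype E]

/-- The Markov operator `U` acting on functions. -/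
noncomputable def Ufun (S : CMS K N E) (f : K → ℝ) : K → ℝ :=
  fun x => ∑ e, S.p e x * f (S.w e x)

/-- The adjoint Markov operator `U*` acting on measures. -/
noncomputable def adjoint (S : CMS K N E) (ν : Measure K) : Measure K :=
  ν.bind fun x => ∑ e, ENNReal.ofReal (S.p e x) • Measure.dirac (S.w e x)

/-- The weight `p_{e₁}(x) p_{e₂}(w_{e₁} x) ⋯` of a cylinder `[e₁, …, e_k]` started at `x`. -/
noncomputable def cylWeight (S : CMS K N E) : K → List E → ℝ
  | _, [] => 1
  | x, e :: es => S.p e x * S.cylWeight (S.w e x) es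

/-- `M` is the generalized Markov measure associated with the CMS and invariant measure `μ`. -/
def IsGMarkovMeasure [MeasurableSpace E] (S : CMS K N E)
    (μ : Measure K) (M : Measure (ℤ → E)) : Prop :=
  IsProbabilityMeasure M ∧
  ∀ (m : ℤ) (es : List E),
    M {σ | ∀ j : Fin es.length, σ (m + (j : ℕ)) = es.get j} =
      ENNReal.ofReal (∫ x, S.cylWeight x es ∂μ)

/-- `comp S σ n = w_{σ 0} ∘ w_{σ (-1)} ∘ ⋯ ∘ w_{σ (-n)}`. -/
noncomputable def comp (S : CMS K N E) (σ : ℤ → E) : ℕ → K → K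
  | 0, x => S.w (σ 0) x
  | n + 1, x => S.comp σ n (S.w (σ (-((n : ℤ) + 1))) x)

/-- `codeSeq S xs σ n = w_{σ 0} ∘ ⋯ ∘ w_{σ (-n)} (x_{i(σ (-n))})`. -/
noncomputable def codeSeq (S : CMS K N E) (xs : Fin N → K) (σ : ℤ → E) (n : ℕ) : K :=
  S.comp σ n (xs (S.ι (σ (-(n : ℤ)))))

end CMS

/-- The left shift `S` on `Σ = E^ℤ`. -/
def shiftL (E : Type*) : (ℤ → E) → ℤ → E := fun σ j => σ (j + 1)

/-- The `n`-fold left shift `S^n` on `Σ = E^ℤ`, `n ∈ ℤ`. -/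
def shiftZ (E : Type*) (n : ℤ) : (ℤ → E) → ℤ → E := fun σ j => σ (j + n)

namespace CMS

variable {K : Type*} [MetricSpace K] [MeasurableSpace K]
  {N : ℕ} {E : Type*} [Fintype E]

/-- The subshift `Σ_G` of (two-sided) paths of the directed multigraph. -/
def SigmaG (S : CMS K N E) : Set (ℤ → E) :=
  {σ | ∀ j : ℤ, S.τ (σ j) = S.ι (σ (j + 1))}

/-- The set `D` of paths where the coding limit exists. -/
def Dset (S : CMS K N E) (xs : Fin N → K) : Set (ℤ → E) :=
  {σ ∈ S.SigmaG | ∃ L : K, Tendsto (S.codeSeq xs σ) atTop (nhds L)}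

/-- `Y = ⋂_{n ∈ ℤ} S^n(D)`. -/
def Yset (S : CMS K N E) (xs : Fin N → K) : Set (ℤ → E) :=
  ⋂ n : ℤ, shiftZ E n '' S.Dset xs

/-- The coding map `F`. -/
noncomputable def F [Nonempty K] (S : CMS K N E) (xs : Fin N → K) (σ : ℤ → E) : K :=
  limUnder atTop (S.codeSeq xs σ)

end CMS

/-- The modulus of uniform continuity of `f` on the set `A`. -/
noncomputable def modulusOn {K : Type*} [MetricSpace K] (f : K → ℝ) (A : Set K) (t : ℝ) : ℝ :=
  sSup {s | ∃ x ∈ A, ∃ y ∈ A, dist x y ≤ t ∧ s = |f x - f y|}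

/-- Dini-continuity of `f` on `A`: `∫_0^c φ(t)/t dt < ∞` for some `c > 0`. -/
def DiniOn {K : Type*} [MetricSpace K] (f : K → ℝ) (A : Set K) : Prop :=
  ∃ c > 0, ∫⁻ t in Set.Ioc (0 : ℝ) c, ENNReal.ofReal (modulusOn f A t / t) < ⊤

/-!
On `K_i` put `f x = d(x, x_i)`. Averaging the contraction condition at `x` and `x_i` and applying
the triangle inequality gives the drift inequality `U f ≤ a f + C` with
`C = ∑_e d(w_e x_{i(e)}, x_{t(e)})`. Since `U` is Markov, `U (min f n) ≤ min (U f) n`, so invariance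
of `μ` gives `∫ min f n dμ ≤ ∫ min (a f + C) n dμ`. Comparing the two sides on `{f ≤ n}` yields
`(1 - a) ∫_{f ≤ n} f dμ ≤ C`, and monotone convergence lets `n → ∞`.
-/

section

variable {α : Type*} [MeasurableSpace α] {μ : Measure α}

theorem tsub_mul_indicator_add_min_le {a C t x : ℝ≥0∞} (ha : a ≤ 1) :
    (1 - a) * (Set.Iic t).indicator id x + min (a * x + C) t ≤ min x t + C := by
  by_cases hx : x ≤ t
  · calc (1 - a) * (Set.Iic t).indicator id x + min (a * x + C) t
        ≤ (1 - a) * x + (a * x + C) := by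
          rw [Set.indicator_of_mem (Set.mem_Iic.2 hx)]
          exact add_le_add_right (min_le_left _ _) _
      _ = x + C := by rw [← add_assoc, ← add_mul, tsub_add_cancel_of_le ha, one_mul]
      _ = min x t + C := by rw [min_eq_left hx]
  · rw [Set.indicator_of_notMem (mt Set.mem_Iic.1 hx), mul_zero, zero_add,
      min_eq_right (not_le.1 hx).le]
    exact (min_le_right _ _).trans le_self_add

theorem one_sub_mul_lintegral_le_of_lintegral_min_le [IsFiniteMeasure μ] {f : α → ℝ≥0∞}
    (hf : Measurable f) (hf_top : ∀ x, f x ≠ ∞) {a C : ℝ≥0∞} (ha : a ≤ 1)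
    (h : ∀ n : ℕ, ∫⁻ x, min (f x) n ∂μ ≤ ∫⁻ x, min (a * f x + C) n ∂μ) :
    (1 - a) * ∫⁻ x, f x ∂μ ≤ C * μ Set.univ := by
  set g : ℕ → α → ℝ≥0∞ := fun n x => (Set.Iic (n : ℝ≥0∞)).indicator id (f x)
  have hg_meas : ∀ n, Measurable (g n) := fun n =>
    (measurable_id.indicator measurableSet_Iic).comp hf
  have hg_mono : Monotone g := fun m n hmn x =>
    Set.indicator_le_indicator_of_subset (Set.Iic_subset_Iic.2 (Nat.cast_le.2 hmn))
      (fun _ => zero_le) _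
  have hg_iSup : ∀ x, ⨆ n, g n x = f x := fun x => by
    obtain ⟨n, hn⟩ := ENNReal.exists_nat_gt (hf_top x)
    refine le_antisymm (iSup_le fun n => Set.indicator_le_self _ _ _) (le_iSup_of_le n ?_)
    exact (Set.indicator_of_mem (Set.mem_Iic.2 hn.le) id).ge
  have hg_bound : ∀ n : ℕ, (1 - a) * ∫⁻ x, g n x ∂μ ≤ C * μ Set.univ := fun n => by
    have hmin_top : ∫⁻ x, min (a * f x + C) n ∂μ ≠ ∞ :=
      ((lintegral_mono fun x => min_le_right _ (n : ℝ≥0∞)).trans_lt (by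
        rw [lintegral_const]
        exact ENNReal.mul_lt_top (ENNReal.natCast_lt_top n) (measure_lt_top μ _))).ne
    refine ENNReal.le_of_add_le_add_right hmin_top ?_
    calc (1 - a) * ∫⁻ x, g n x ∂μ + ∫⁻ x, min (a * f x + C) n ∂μ
        = ∫⁻ x, ((1 - a) * g n x + min (a * f x + C) n) ∂μ := by
          rw [lintegral_add_left ((hg_meas n).const_mul _), lintegral_const_mul _ (hg_meas n)]
      _ ≤ ∫⁻ x, (min (f x) n + C) ∂μ :=
          lintegral_mono fun x => tsub_mul_indicator_add_min_le ha
      _ = ∫⁻ x, min (f x) n ∂μ + C * μ Set.univ := by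
          rw [lintegral_add_right _ measurable_const, lintegral_const]
      _ ≤ ∫⁻ x, min (a * f x + C) n ∂μ + C * μ Set.univ := add_le_add (h n) le_rfl
      _ = C * μ Set.univ + ∫⁻ x, min (a * f x + C) n ∂μ := add_comm _ _
  calc (1 - a) * ∫⁻ x, f x ∂μ = ⨆ n, (1 - a) * ∫⁻ x, g n x ∂μ := by
        simp_rw [← hg_iSup, lintegral_iSup hg_meas hg_mono, ENNReal.mul_iSup]
    _ ≤ C * μ Set.univ := iSup_le hg_bound

end

namespace CMS

variable {K : Type*} [MetricSpace K] [MeasurableSpace K] {N : ℕ} {E : Type*} [Fintype E]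
  (S : CMS K N E)

/-- `Ufun` on `ℝ≥0∞`-valued functions, to be paired with `lintegral`. -/
noncomputable def lUfun (g : K → ℝ≥0∞) (x : K) : ℝ≥0∞ :=
  ∑ e, ENNReal.ofReal (S.p e x) * g (S.w e x)

noncomputable def baseDist (xs : Fin N → K) (x : K) : ℝ≥0∞ :=
  ∑ i, (S.Ks i).indicator (fun y => ENNReal.ofReal (dist y (xs i))) x

theorem sum_ofReal_p (x : K) : ∑ e, ENNReal.ofReal (S.p e x) = 1 := by
  rw [← ENNReal.ofReal_sum_of_nonneg fun e _ => S.p_nonneg e x, S.p_sum_one, ENNReal.ofReal_one]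

theorem p_le_one (e : E) (x : K) : S.p e x ≤ 1 :=
  S.p_sum_one x ▸ Finset.single_le_sum (fun e _ => S.p_nonneg e x) (Finset.mem_univ e)

theorem exists_mem_Ks (x : K) : ∃ i, x ∈ S.Ks i :=
  Set.mem_iUnion.1 (S.Ks_cover ▸ Set.mem_univ x)

theorem p_eq_zero_of_mem {i : Fin N} {x : K} (hx : x ∈ S.Ks i) {e : E} (he : S.ι e ≠ i) :
    S.p e x = 0 :=
  S.p_zero e x fun hx' => Set.disjoint_left.1 (S.Ks_disj _ _ he) hx' hx

theorem lUfun_min_le (g : K → ℝ≥0∞) (t : ℝ≥0∞) (x : K) :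
    S.lUfun (fun y => min (g y) t) x ≤ min (S.lUfun g x) t := by
  refine le_min (Finset.sum_le_sum fun e _ => by gcongr; exact min_le_left ..) ?_
  calc S.lUfun (fun y => min (g y) t) x ≤ ∑ e, ENNReal.ofReal (S.p e x) * t :=
        Finset.sum_le_sum fun e _ => by gcongr; exact min_le_right _ _
    _ = t := by rw [← Finset.sum_mul, sum_ofReal_p, one_mul]

theorem lintegral_adjoint (ν : Measure K) {g : K → ℝ≥0∞} (hg : Measurable g) :
    ∫⁻ x, g x ∂(S.adjoint ν) = ∫⁻ x, S.lUfun g x ∂ν := by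
  have hκ : Measurable fun x => ∑ e, ENNReal.ofReal (S.p e x) • Measure.dirac (S.w e x) := by
    refine Measure.measurable_of_measurable_coe _ fun s hs => ?_
    simp only [Measure.finsetSum_apply, Measure.smul_apply, smul_eq_mul,
      Measure.dirac_apply' _ hs]
    exact Finset.measurable_sum _ fun e _ =>
      (S.p_meas e).ennreal_ofReal.mul ((measurable_one.indicator hs).comp (S.w_meas e))
  rw [adjoint, Measure.lintegral_bind hκ.aemeasurable hg.aemeasurable]
  refine lintegral_congr fun x => ?_
  rw [lintegral_finsetSum_measure]
  refine Finset.sum_congr rfl fun e _ => ?_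
  rw [lintegral_smul_measure, lintegral_dirac' _ hg, smul_eq_mul]

theorem baseDist_of_mem {xs : Fin N → K} {i : Fin N} {x : K} (hx : x ∈ S.Ks i) :
    S.baseDist xs x = ENNReal.ofReal (dist x (xs i)) := by
  rw [baseDist, Finset.sum_eq_single i, Set.indicator_of_mem hx]
  · exact fun j _ hji => Set.indicator_of_notMem
      (fun hxj => Set.disjoint_left.1 (S.Ks_disj j i hji) hxj hx) _
  · exact fun h => absurd (Finset.mem_univ i) h

theorem baseDist_ne_top (xs : Fin N → K) (x : K) : S.baseDist xs x ≠ ∞ := by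
  obtain ⟨i, hx⟩ := S.exists_mem_Ks x
  rw [S.baseDist_of_mem hx]
  exact ENNReal.ofReal_ne_top

theorem measurable_indicator_ofReal_dist [OpensMeasurableSpace K] (xs : Fin N → K) (i : Fin N) :
    Measurable ((S.Ks i).indicator fun y => ENNReal.ofReal (dist y (xs i))) :=
  (by fun_prop : Measurable fun y => ENNReal.ofReal (dist y (xs i))).indicator (S.Ks_meas i)

theorem measurable_baseDist [OpensMeasurableSpace K] (xs : Fin N → K) :
    Measurable (S.baseDist xs) :=
  Finset.measurable_sum _ fun i _ => S.measurable_indicator_ofReal_dist xs i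

theorem lintegral_baseDist [OpensMeasurableSpace K] (xs : Fin N → K) (μ : Measure K) :
    ∫⁻ x, S.baseDist xs x ∂μ = ∑ i, ∫⁻ x in S.Ks i, ENNReal.ofReal (dist x (xs i)) ∂μ := by
  simp only [baseDist]
  rw [lintegral_finsetSum _ fun i _ => S.measurable_indicator_ofReal_dist xs i]
  exact Finset.sum_congr rfl fun i _ => lintegral_indicator (S.Ks_meas i) _

theorem lUfun_baseDist_le {xs : Fin N → K} (hxs : ∀ i, xs i ∈ S.Ks i) (x : K) :
    S.lUfun (S.baseDist xs) x ≤ ENNReal.ofReal S.a * S.baseDist xs x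
      + ∑ e, ENNReal.ofReal (dist (S.w e (xs (S.ι e))) (xs (S.τ e))) := by
  obtain ⟨i, hx⟩ := S.exists_mem_Ks x
  have hterm : ∀ e, ENNReal.ofReal (S.p e x) * S.baseDist xs (S.w e x)
      ≤ ENNReal.ofReal (S.p e x * dist (S.w e x) (S.w e (xs i)))
        + ENNReal.ofReal (dist (S.w e (xs (S.ι e))) (xs (S.τ e))) := by
    intro e
    by_cases hie : S.ι e = i
    · subst hie
      rw [S.baseDist_of_mem (S.w_maps e hx), ← ENNReal.ofReal_mul (S.p_nonneg e x),
        ← ENNReal.ofReal_add (mul_nonneg (S.p_nonneg e x) dist_nonneg) dist_nonneg]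
      refine ENNReal.ofReal_le_ofReal ?_
      have hp := S.p_nonneg e x
      have htri := dist_triangle (S.w e x) (S.w e (xs (S.ι e))) (xs (S.τ e))
      have hd := dist_nonneg (x := S.w e (xs (S.ι e))) (y := xs (S.τ e))
      nlinarith [S.p_le_one e x]
    · rw [S.p_eq_zero_of_mem hx hie, ENNReal.ofReal_zero, zero_mul]
      exact zero_le
  calc S.lUfun (S.baseDist xs) x
      ≤ ∑ e, (ENNReal.ofReal (S.p e x * dist (S.w e x) (S.w e (xs i)))
          + ENNReal.ofReal (dist (S.w e (xs (S.ι e))) (xs (S.τ e)))) :=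
        Finset.sum_le_sum fun e _ => hterm e
    _ ≤ _ := by
      rw [Finset.sum_add_distrib, ← ENNReal.ofReal_sum_of_nonneg fun e _ =>
        mul_nonneg (S.p_nonneg e x) dist_nonneg, S.baseDist_of_mem hx,
        ← ENNReal.ofReal_mul S.a_pos.le]
      gcongr
      exact S.contractive i x hx (xs i) (hxs i)

end CMS

theorem cms_unique_finite_moment_general
    {K : Type*} [MetricSpace K] [MeasurableSpace K] [BorelSpace K]
    {N : ℕ} {E : Type*} [Fintype E] (S : CMS K N E)
    (μ : Measure K) (hμ : IsProbabilityMeasure μ) (hinv : S.adjoint μ = μ) :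
    ∀ xs : Fin N → K, (∀ i, xs i ∈ S.Ks i) →
      ∑ i, ∫⁻ x in S.Ks i, ENNReal.ofReal (dist x (xs i)) ∂μ < ⊤ := by
  intro xs hxs
  set f := S.baseDist xs
  set C := ∑ e, ENNReal.ofReal (dist (S.w e (xs (S.ι e))) (xs (S.τ e)))
  have hf := S.measurable_baseDist xs
  have hbound : (1 - ENNReal.ofReal S.a) * ∫⁻ x, f x ∂μ ≤ C * μ Set.univ := by
    refine one_sub_mul_lintegral_le_of_lintegral_min_le hf (S.baseDist_ne_top xs)
      (ENNReal.ofReal_le_one.2 S.a_lt_one.le) fun n => ?_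
    calc ∫⁻ x, min (f x) n ∂μ = ∫⁻ x, S.lUfun (fun y => min (f y) n) x ∂μ := by
          rw [← S.lintegral_adjoint μ (hf.min measurable_const), hinv]
      _ ≤ ∫⁻ x, min (S.lUfun f x) n ∂μ := lintegral_mono fun x => S.lUfun_min_le f n x
      _ ≤ ∫⁻ x, min (ENNReal.ofReal S.a * f x + C) n ∂μ :=
          lintegral_mono fun x => min_le_min_right _ (S.lUfun_baseDist_le hxs x)
  rw [← S.lintegral_baseDist]
  refine ENNReal.lt_top_of_mul_ne_top_right (ne_top_of_le_ne_top ?_ hbound) ?_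
  · rw [measure_univ, mul_one]
    exact ENNReal.sum_ne_top.2 fun e _ => ENNReal.ofReal_ne_top
  · exact (tsub_pos_of_lt (ENNReal.ofReal_lt_one.2 S.a_lt_one)).ne'

theorem cms_unique_finite_moment
    {K : Type*} [MetricSpace K] [MeasurableSpace K] [BorelSpace K]
    {N : ℕ} {E : Type*} [Fintype E] (S : CMS K N E)
    (hProper : ∀ A : Set K, Bornology.IsBounded A → IsCompact (closure A))
    (hOpen : ∀ i, IsOpen (S.Ks i))
    (hCont : ∀ e, ContinuousOn (S.p e) (S.Ks (S.ι e)))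
    (μ : Measure K) (hμ : IsProbabilityMeasure μ) (hinv : S.adjoint μ = μ)
    (huniq : ∀ ν : Measure K, IsProbabilityMeasure ν → S.adjoint ν = ν → ν = μ) :
    ∀ xs : Fin N → K, (∀ i, xs i ∈ S.Ks i) →
      ∑ i, ∫⁻ x in S.Ks i, ENNReal.ofReal (dist x (xs i)) ∂μ < ⊤ :=
  cms_unique_finite_moment_general S μ hμ hinv
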